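/- Fix M ≥ 2, α > 0 and ε ∈ (0,1) with ε/2 − log ε > α log M − log 2 + 1. Let Δ_K be as above (scaled chi-square with 2K degrees of freedom) and P_K := M^{αK} · P(Δ_K ≤ ε). Then lim_{K→∞} P_K = 0. -/

import Mathlib

/-! On `(0, ε]` the integrand is at most `K e^K / 2^K · (ε e^{-ε/2})^{K-1}`, because `v e^{-v/2}`
increases on `[0, 2]` and `K^K / Γ(K) ≤ K e^K` (from `K^K / K! ≤ e^K`). Hence
`P_K ≤ e^{ε/2} K r^K` with `r = M^α · e ε e^{-ε/2} / 2`, and the hypothesis on `ε` is exactly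
`log r < 0`. -/

open MeasureTheory Filter Real
open scoped Nat

/-- The density of `Δ_K`: the Gamma law with shape `K` and rate `K / 2`. -/
noncomputable def deltaDensity (K : ℕ) (v : ℝ) : ℝ :=
  (K : ℝ) ^ K / (2 ^ K * Gamma K) * v ^ (K - 1) * exp (-(K : ℝ) * v / 2)

theorem deltaDensity_nonneg (K : ℕ) {v : ℝ} (hv : 0 ≤ v) : 0 ≤ deltaDensity K v := by
  have := Gamma_nonneg_of_nonneg K.cast_nonneg
  unfold deltaDensity
  positivity

theorem mul_exp_neg_half_le_of_le {v ε : ℝ} (hv : 0 ≤ v) (hvε : v ≤ ε) (hε : ε ≤ 2) :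
    v * exp (-(v / 2)) ≤ ε * exp (-(ε / 2)) :=
  calc v * exp (-(v / 2)) ≤ ε * ((v - ε) / 2 + 1) * exp (-(v / 2)) := by gcongr; nlinarith
    _ ≤ ε * exp ((v - ε) / 2) * exp (-(v / 2)) := by
      have : 0 ≤ ε := hv.trans hvε
      gcongr
      exact add_one_le_exp _
    _ = ε * exp (-(ε / 2)) := by rw [mul_assoc, ← exp_add]; ring_nf

theorem natCast_pow_self_div_Gamma_le {K : ℕ} (hK : 0 < K) :
    (K : ℝ) ^ K / Gamma K ≤ K * exp K := by
  obtain ⟨n, rfl⟩ := Nat.exists_eq_add_one_of_ne_zero hK.ne'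
  have hfact : ((n + 1)! : ℝ) = (n + 1) * n ! := by push_cast [Nat.factorial_succ]; ring
  have hexp := pow_div_factorial_le_exp (n + 1 : ℝ) (by positivity) (n + 1)
  push_cast at hexp ⊢
  rw [Gamma_nat_eq_factorial, div_le_iff₀ (by positivity)]
  rw [hfact, div_le_iff₀ (by positivity)] at hexp
  linarith

theorem deltaDensity_le {K : ℕ} (hK : 0 < K) {v ε : ℝ} (hv : 0 ≤ v) (hvε : v ≤ ε)
    (hε : ε ≤ 2) :
    deltaDensity K v ≤ K * exp K / 2 ^ K * (ε * exp (-(ε / 2))) ^ (K - 1) := by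
  obtain ⟨n, rfl⟩ := Nat.exists_eq_add_one_of_ne_zero hK.ne'
  have hΓ := natCast_pow_self_div_Gamma_le hK
  have hexp : exp (-((n + 1 : ℕ) : ℝ) * v / 2) ≤ exp (-(v / 2)) ^ n := by
    rw [← exp_nat_mul]
    gcongr
    push_cast
    linarith
  have hpow : (v * exp (-(v / 2))) ^ n ≤ (ε * exp (-(ε / 2))) ^ n :=
    pow_le_pow_left₀ (by positivity) (mul_exp_neg_half_le_of_le hv hvε hε) n
  calc deltaDensity (n + 1) v
      = ((n + 1 : ℕ) : ℝ) ^ (n + 1) / Gamma (n + 1 : ℕ) / 2 ^ (n + 1) *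
          (v ^ n * exp (-((n + 1 : ℕ) : ℝ) * v / 2)) := by
        unfold deltaDensity
        rw [Nat.add_sub_cancel]
        ring
    _ ≤ (n + 1 : ℕ) * exp (n + 1 : ℕ) / 2 ^ (n + 1) * (v * exp (-(v / 2))) ^ n := by
        rw [mul_pow]
        gcongr
    _ ≤ _ := by
        rw [Nat.add_sub_cancel]
        gcongr

theorem setIntegral_deltaDensity_le {K : ℕ} (hK : 0 < K) {ε : ℝ} (hε0 : 0 < ε) (hε : ε ≤ 2) :
    ∫ v in Set.Ioc 0 ε, deltaDensity K v ≤
      exp (ε / 2) * (K * exp (1 + log ε - ε / 2 - log 2) ^ K) := by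
  set s := ε * exp (-(ε / 2)) with hs
  have hrate : exp (1 + log ε - ε / 2 - log 2) = exp 1 * s / 2 := by
    rw [exp_sub, exp_sub, exp_add, exp_log hε0, exp_log two_pos, hs, exp_neg]
    ring
  have hε_eq : exp (ε / 2) * s = ε := by
    rw [hs, mul_left_comm, ← exp_add, add_neg_cancel, exp_zero, mul_one]
  have hbound : ∀ v ∈ Set.Ioc 0 ε, ‖deltaDensity K v‖ ≤ K * exp K / 2 ^ K * s ^ (K - 1) :=
    fun v hv => by
      rw [Real.norm_of_nonneg (deltaDensity_nonneg K hv.1.le)]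
      exact deltaDensity_le hK hv.1.le hv.2 hε
  obtain ⟨n, rfl⟩ := Nat.exists_eq_add_one_of_ne_zero hK.ne'
  calc ∫ v in Set.Ioc 0 ε, deltaDensity (n + 1) v
      ≤ ‖∫ v in Set.Ioc 0 ε, deltaDensity (n + 1) v‖ := le_norm_self _
    _ ≤ (n + 1 : ℕ) * exp (n + 1 : ℕ) / 2 ^ (n + 1) * s ^ n * ε := by
        simpa [Real.volume_real_Ioc_of_le hε0.le] using
          norm_setIntegral_le_of_norm_le_const (μ := volume) measure_Ioc_lt_top hbound
    _ = exp (ε / 2) * ((n + 1 : ℕ) * exp (1 + log ε - ε / 2 - log 2) ^ (n + 1)) := by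
        nth_rewrite 1 [← hε_eq]
        rw [hrate, div_pow, ← exp_one_pow]
        ring

theorem mpsk_union_bound_vanishes_general (M : ℕ) (α ε : ℝ)
    (hε0 : 0 < ε) (hε1 : ε < 1)
    (hcond : ε / 2 - Real.log ε > α * Real.log M - Real.log 2 + 1) :
    Tendsto (fun K : ℕ =>
        (M : ℝ) ^ (α * K) *
          ∫ v in Set.Ioc (0 : ℝ) ε,
            (K : ℝ) ^ K / (2 ^ K * Real.Gamma (K : ℝ)) * v ^ (K - 1) *
              Real.exp (-(K : ℝ) * v / 2))
      atTop (nhds 0) := by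
  set r := exp (log M * α + (1 + log ε - ε / 2 - log 2)) with hr_def
  have hr : r < 1 := exp_lt_one_iff.mpr (by linarith)
  have hnonneg (K : ℕ) : 0 ≤ (M : ℝ) ^ (α * K) * ∫ v in Set.Ioc 0 ε, deltaDensity K v :=
    mul_nonneg (by positivity)
      (setIntegral_nonneg measurableSet_Ioc fun v hv => deltaDensity_nonneg K hv.1.le)
  have hbound (K : ℕ) (hK : 0 < K) :
      (M : ℝ) ^ (α * K) * ∫ v in Set.Ioc 0 ε, deltaDensity K v ≤ exp (ε / 2) * (K * r ^ K) := by
    have hMpow : (M : ℝ) ^ (α * K) ≤ exp (log M * α) ^ K := by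
      rw [Real.rpow_mul M.cast_nonneg, Real.rpow_natCast]
      exact pow_le_pow_left₀ (by positivity)
        ((le_abs_self _).trans (abs_rpow_le_exp_log_mul _ _)) K
    calc (M : ℝ) ^ (α * K) * ∫ v in Set.Ioc 0 ε, deltaDensity K v
        ≤ exp (log M * α) ^ K * (exp (ε / 2) * (K * exp (1 + log ε - ε / 2 - log 2) ^ K)) :=
          mul_le_mul hMpow (setIntegral_deltaDensity_le hK hε0 (by linarith))
            (setIntegral_nonneg measurableSet_Ioc fun v hv => deltaDensity_nonneg K hv.1.le)
            (by positivity)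
      _ = exp (ε / 2) * (K * r ^ K) := by rw [hr_def, exp_add, mul_pow]; ring
  have hlimit : Tendsto (fun K : ℕ => exp (ε / 2) * (K * r ^ K)) atTop (nhds 0) := by
    simpa using (tendsto_self_mul_const_pow_of_lt_one (exp_pos _).le hr).const_mul (exp (ε / 2))
  exact squeeze_zero' (Eventually.of_forall hnonneg)
    ((eventually_gt_atTop 0).mono hbound) hlimit

/-- Union bound for M-PSK LSE precoding (Appendix D): for `M ≥ 2`, `α > 0` and `ε ∈ (0,1)` with
`ε/2 - log ε > α log M - log 2 + 1`, the sequence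
`P_K = M^(αK) · P(Δ_K ≤ ε)`, where `Δ_K` has density `K^K/(2^K Γ(K)) v^(K-1) e^(-Kv/2)` on
`v > 0`, tends to `0` as `K → ∞`. -/
theorem mpsk_union_bound_vanishes (M : ℕ) (hM : 2 ≤ M) (α ε : ℝ) (hα : 0 < α)
    (hε0 : 0 < ε) (hε1 : ε < 1)
    (hcond : ε / 2 - Real.log ε > α * Real.log M - Real.log 2 + 1) :
    Tendsto (fun K : ℕ =>
        (M : ℝ) ^ (α * K) *
          ∫ v in Set.Ioc (0 : ℝ) ε,
            (K : ℝ) ^ K / (2 ^ K * Real.Gamma (K : ℝ)) * v ^ (K - 1) *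
              Real.exp (-(K : ℝ) * v / 2))
      atTop (nhds 0) :=
  mpsk_union_bound_vanishes_general M α ε hε0 hε1 hcond
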